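/- arXiv:2004.03795 — 2 statements merged into one kernel-verified Lean document; each statement's English description precedes it below -/
import Mathlib

section
/- (Fundamental inequalities.) Assume hypothesis (H2) with constant D. Then there is a constant c ≥ 0, depending only on D, such that for every real λ and all integers 0 ≤ l ≤ m ≤ n one has e^{−c|λ|} ≤ Z_{l,n}(λ) / (Z_{l,m}(λ) · Z_{m,n}(λ)) ≤ e^{c|λ|}. -/
open MeasureTheory Filter Finset
open scoped ENNReal Topology

noncomputable section

/-- The shift map `T` on `ℕ → S`, `(Tx)_n = x_{n+1}`. -/
def shift {S : Type*} (x : ℕ → S) : ℕ → S := fun n => x (n + 1)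

/-- The cylinder `[a_0, …, a_{m-1}]` of all `y` with `y_i = a_i` for `0 ≤ i < m`. -/
def cyl {S : Type*} {m : ℕ} (a : Fin m → S) : Set (ℕ → S) :=
  {y : ℕ → S | ∀ i : Fin m, y i = a i}

/-- The partial weighted Birkhoff sum `S_{m,n} f(x) = ∑_{k=m}^{n-1} f_k(T^k x)`. -/
def birk {S : Type*} (f : ℕ → (ℕ → S) → ℝ) (m n : ℕ) (x : ℕ → S) : ℝ :=
  ∑ k ∈ Finset.Ico m n, f k (shift^[k] x)

/-- The partition function `Z_{m,n}(λ) = ∫ exp(λ S_{m,n}f) dσ`. -/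
def Zmn {S : Type*} [MeasurableSpace S] (σ : Measure (ℕ → S))
    (f : ℕ → (ℕ → S) → ℝ) (lam : ℝ) (m n : ℕ) : ℝ :=
  ∫ x, Real.exp (lam * birk f m n x) ∂σ

/-- Hypothesis (H2): uniformly bounded distortion. -/
def H2 {S : Type*} (f : ℕ → (ℕ → S) → ℝ) (D : ℝ) : Prop :=
  ∀ N : ℕ, 1 ≤ N → ∀ x y : ℕ → S, (∀ i, i < N → x i = y i) →
    ∑ k ∈ Finset.range N, |f k (shift^[k] x) - f k (shift^[k] y)| ≤ D

/-! Freeze every letter of `x` from position `b` on to a fixed symbol: by (H2) this moves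
`λ S_{a,b} f` by at most `|λ| D`, hence `log Z_{a,b}(λ)` by at most `|λ| D`. After freezing,
the sums over `[l, m)` and `[m, n)` depend on the disjoint coordinate blocks `[0, m)` and
`[m, n)`, which are independent under the uniform Bernoulli measure, so the frozen partition
functions multiply exactly. Comparing through them gives
`|log Z_{l,n} - log Z_{l,m} - log Z_{m,n}| ≤ 4 D |λ|`. -/

section Words

variable {S : Type*}

def word (n : ℕ) (x : ℕ → S) : Fin n → S := fun i => x i

def ofWord (s₀ : S) {n : ℕ} (a : Fin n → S) : ℕ → S :=
  fun i => if h : i < n then a ⟨i, h⟩ else s₀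

lemma ofWord_apply_of_lt (s₀ : S) {n : ℕ} (a : Fin n → S) {i : ℕ} (hi : i < n) :
    ofWord s₀ a i = a ⟨i, hi⟩ :=
  dif_pos hi

lemma ofWord_word_apply_of_lt (s₀ : S) {n : ℕ} (x : ℕ → S) {i : ℕ} (hi : i < n) :
    ofWord s₀ (word n x) i = x i :=
  dif_pos hi

lemma ofWord_append_of_lt (s₀ : S) {m k : ℕ} (p : Fin m → S) (r : Fin k → S) {i : ℕ}
    (hi : i < m) : ofWord s₀ (Fin.append p r) i = ofWord s₀ p i := by
  rw [ofWord_apply_of_lt _ _ (by omega), ofWord_apply_of_lt _ _ hi]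
  exact Fin.append_left p r ⟨i, hi⟩

lemma ofWord_append_of_le (s₀ : S) {m k : ℕ} (p : Fin m → S) (r : Fin k → S) {i : ℕ}
    (hi : m ≤ i) : ofWord s₀ (Fin.append p r) i = ofWord s₀ r (i - m) := by
  by_cases hik : i < m + k
  · rw [ofWord_apply_of_lt _ _ hik, ofWord_apply_of_lt _ _ (by omega)]
    convert Fin.append_right p r ⟨i - m, by omega⟩ using 2
    ext
    simp only [Fin.val_natAdd]
    omega
  · simp only [ofWord, dif_neg hik, dif_neg (show ¬ i - m < k by omega)]

lemma DependsOn.apply_ofWord_word {β : Type*} {u : (ℕ → S) → β} {n : ℕ}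
    (hu : DependsOn u (Set.Iio n)) (s₀ : S) (x : ℕ → S) : u (ofWord s₀ (word n x)) = u x :=
  hu fun _ hi => ofWord_word_apply_of_lt s₀ x hi

lemma DependsOn.comp_ofWord_word {β : Type*} {u : (ℕ → S) → β} {s : Set ℕ}
    (hu : DependsOn u s) (s₀ : S) (n : ℕ) :
    DependsOn (fun x => u (ofWord s₀ (word n x))) (s ∩ Set.Iio n) := fun x y hxy =>
  hu fun i hi => by
    by_cases hin : i < n
    · rw [ofWord_word_apply_of_lt s₀ x hin, ofWord_word_apply_of_lt s₀ y hin]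
      exact hxy i ⟨hi, hin⟩
    · simp only [ofWord, dif_neg hin]

lemma preimage_word_singleton {n : ℕ} (a : Fin n → S) : word n ⁻¹' {a} = cyl a := by
  ext y
  simp [word, cyl, funext_iff]

lemma measurable_word [MeasurableSpace S] (n : ℕ) : Measurable (word (S := S) n) :=
  measurable_pi_lambda _ fun i => measurable_pi_apply (i : ℕ)

lemma continuous_word [TopologicalSpace S] (n : ℕ) : Continuous (word (S := S) n) :=
  continuous_pi fun i => continuous_apply (i : ℕ)

end Words

section Bernoulli

variable {S : Type*} [Fintype S] [MeasurableSpace S] [MeasurableSingletonClass S]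
  {σ : Measure (ℕ → S)} [IsProbabilityMeasure σ]

lemma integral_comp_word
    (hσ : ∀ (m : ℕ) (a : Fin m → S), σ (cyl a) = (Fintype.card S : ℝ≥0∞)⁻¹ ^ m)
    (n : ℕ) (Φ : (Fin n → S) → ℝ) :
    ∫ x, Φ (word n x) ∂σ = ((Fintype.card S : ℝ)⁻¹) ^ n * ∑ a, Φ a := by
  rw [← integral_map (measurable_word n).aemeasurable
    (Measurable.of_discrete (f := Φ)).aestronglyMeasurable, integral_fintype .of_finite,
    mul_sum]
  refine sum_congr rfl fun a _ => ?_
  rw [measureReal_def, Measure.map_apply (measurable_word n) (measurableSet_singleton a),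
    preimage_word_singleton, hσ, smul_eq_mul]
  simp

lemma integral_mul_eq_of_dependsOn_Iio_Ico
    (hσ : ∀ (m : ℕ) (a : Fin m → S), σ (cyl a) = (Fintype.card S : ℝ≥0∞)⁻¹ ^ m)
    (s₀ : S) {m k : ℕ} {u v : (ℕ → S) → ℝ}
    (hu : DependsOn u (Set.Iio m)) (hv : DependsOn v (Set.Ico m (m + k))) :
    ∫ x, u x * v x ∂σ =
      (((Fintype.card S : ℝ)⁻¹) ^ m * ∑ p : Fin m → S, u (ofWord s₀ p)) *
        (((Fintype.card S : ℝ)⁻¹) ^ k *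
          ∑ r : Fin k → S, v (ofWord s₀ (Fin.append (fun _ : Fin m => s₀) r))) := by
  have hsplit : ∀ (p : Fin m → S) (r : Fin k → S),
      u (ofWord s₀ (Fin.append p r)) * v (ofWord s₀ (Fin.append p r)) =
        u (ofWord s₀ p) * v (ofWord s₀ (Fin.append (fun _ : Fin m => s₀) r)) := fun p r => by
    have hu_split : u (ofWord s₀ (Fin.append p r)) = u (ofWord s₀ p) :=
      hu fun i hi => ofWord_append_of_lt s₀ p r hi
    have hv_split : v (ofWord s₀ (Fin.append p r)) =
        v (ofWord s₀ (Fin.append (fun _ : Fin m => s₀) r)) :=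
      hv fun i hi => (ofWord_append_of_le s₀ p r hi.1).trans
        (ofWord_append_of_le s₀ _ r hi.1).symm
    rw [hu_split, hv_split]
  have huv := integral_comp_word hσ (m + k) fun a => u (ofWord s₀ a) * v (ofWord s₀ a)
  simp only [(hu.mono (Set.Iio_subset_Iio (Nat.le_add_right m k))).apply_ofWord_word,
    (hv.mono fun _ hi => hi.2).apply_ofWord_word] at huv
  rw [huv, ← (Fin.appendEquiv m k).sum_comp, Fintype.sum_prod_type]
  simp only [show ∀ p r, Fin.appendEquiv m k (p, r) = Fin.append p r from fun _ _ => rfl,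
    hsplit, ← sum_mul_sum, pow_add]
  ring

theorem integral_mul_of_dependsOn
    (hσ : ∀ (m : ℕ) (a : Fin m → S), σ (cyl a) = (Fintype.card S : ℝ≥0∞)⁻¹ ^ m)
    {m n : ℕ} (hmn : m ≤ n) {u v : (ℕ → S) → ℝ}
    (hu : DependsOn u (Set.Iio m)) (hv : DependsOn v (Set.Ico m n)) :
    ∫ x, u x * v x ∂σ = (∫ x, u x ∂σ) * ∫ x, v x ∂σ := by
  obtain ⟨k, rfl⟩ := Nat.exists_eq_add_of_le hmn
  obtain ⟨x⟩ := nonempty_of_isProbabilityMeasure σ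
  have : Nonempty S := ⟨x 0⟩
  have hq : (Fintype.card S : ℝ) ≠ 0 := by positivity
  have hu_int := integral_comp_word hσ m fun p => u (ofWord (x 0) p)
  simp only [hu.apply_ofWord_word] at hu_int
  -- `∫ v` is the case `u = 1` of the block formula.
  have hv_int := integral_mul_eq_of_dependsOn_Iio_Ico hσ (x 0)
    (u := fun _ => 1) (fun _ _ _ => rfl) hv
  simp only [one_mul, sum_const, card_univ, Fintype.card_fun, Fintype.card_fin, nsmul_eq_mul,
    mul_one, Nat.cast_pow, ← mul_pow, inv_mul_cancel₀ hq, one_pow] at hv_int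
  rw [integral_mul_eq_of_dependsOn_Iio_Ico hσ (x 0) hu hv, hu_int, hv_int]

end Bernoulli

lemma Continuous.integrable_exp {X : Type*} [TopologicalSpace X] [CompactSpace X]
    [MeasurableSpace X] [OpensMeasurableSpace X] {μ : Measure X} [IsFiniteMeasure μ]
    {u : X → ℝ} (hu : Continuous u) : Integrable (fun x => Real.exp (u x)) μ :=
  (Real.continuous_exp.comp hu).integrable_of_hasCompactSupport (.of_compactSpace _)

lemma exp_neg_le_and_le_exp_of_abs_log_le {r t : ℝ} (hr : 0 < r) (h : |Real.log r| ≤ t) :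
    Real.exp (-t) ≤ r ∧ r ≤ Real.exp t :=
  ⟨(Real.le_log_iff_exp_le hr).1 (abs_le.1 h).1, (Real.log_le_iff_le_exp hr).1 (abs_le.1 h).2⟩

lemma abs_log_integral_exp_sub_le {α : Type*} [MeasurableSpace α] {μ : Measure α} [NeZero μ]
    {u v : α → ℝ} {d : ℝ} (hu : Integrable (fun x => Real.exp (u x)) μ)
    (hv : Integrable (fun x => Real.exp (v x)) μ) (huv : ∀ x, |u x - v x| ≤ d) :
    |Real.log (∫ x, Real.exp (u x) ∂μ) - Real.log (∫ x, Real.exp (v x) ∂μ)| ≤ d := by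
  have key : ∀ {g h : α → ℝ}, Integrable (fun x => Real.exp (g x)) μ →
      Integrable (fun x => Real.exp (h x)) μ → (∀ x, g x ≤ h x + d) →
      Real.log (∫ x, Real.exp (g x) ∂μ) ≤ d + Real.log (∫ x, Real.exp (h x) ∂μ) := by
    intro g h hg hh hgh
    have hle : ∫ x, Real.exp (g x) ∂μ ≤ Real.exp d * ∫ x, Real.exp (h x) ∂μ := by
      rw [← integral_const_mul]
      refine integral_mono hg (hh.const_mul _) fun x => ?_
      rw [← Real.exp_add]
      exact Real.exp_le_exp.2 (by linarith [hgh x])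
    calc Real.log (∫ x, Real.exp (g x) ∂μ)
        ≤ Real.log (Real.exp d * ∫ x, Real.exp (h x) ∂μ) :=
          Real.log_le_log (integral_exp_pos hg) hle
      _ = d + Real.log (∫ x, Real.exp (h x) ∂μ) := by
          rw [Real.log_mul (Real.exp_pos d).ne' (integral_exp_pos hh).ne', Real.log_exp]
  refine abs_le.2 ⟨?_, ?_⟩
  · linarith [key hv hu fun x => by linarith [(abs_le.1 (huv x)).1]]
  · linarith [key hu hv fun x => by linarith [(abs_le.1 (huv x)).2]]

section Birkhoff

variable {S : Type*} {f : ℕ → (ℕ → S) → ℝ}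

lemma shift_iterate_apply (x : ℕ → S) (k i : ℕ) : shift^[k] x i = x (i + k) := by
  induction k generalizing x with
  | zero => rfl
  | succ k ih => rw [Function.iterate_succ_apply, ih]; rfl

lemma continuous_shift [TopologicalSpace S] : Continuous (shift : (ℕ → S) → ℕ → S) :=
  continuous_pi fun n => continuous_apply (n + 1)

lemma continuous_birk [TopologicalSpace S] (hfc : ∀ k, Continuous (f k)) (m n : ℕ) :
    Continuous (birk f m n) :=
  continuous_finsetSum _ fun k _ => (hfc k).comp (continuous_shift.iterate k)

lemma birk_add {l m n : ℕ} (hlm : l ≤ m) (hmn : m ≤ n) (x : ℕ → S) :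
    birk f l m x + birk f m n x = birk f l n x :=
  sum_Ico_consecutive _ hlm hmn

lemma dependsOn_birk (f : ℕ → (ℕ → S) → ℝ) (m n : ℕ) : DependsOn (birk f m n) (Set.Ici m) :=
  fun x y hxy => sum_congr rfl fun k hk => congrArg (f k) <| funext fun i => by
    rw [shift_iterate_apply, shift_iterate_apply]
    exact hxy _ (by simp only [mem_Ico] at hk; simp only [Set.mem_Ici]; omega)

lemma H2.nonneg [Nonempty S] {D : ℝ} (hH2 : H2 f D) : 0 ≤ D := by
  obtain ⟨s⟩ := ‹Nonempty S›
  simpa using hH2 1 le_rfl (fun _ => s) (fun _ => s) fun _ _ => rfl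

lemma H2.abs_birk_sub_le {D : ℝ} (hH2 : H2 f D) {l n : ℕ} {x y : ℕ → S}
    (hxy : ∀ i < n, x i = y i) : |birk f l n x - birk f l n y| ≤ D := by
  rcases n.eq_zero_or_pos with rfl | hn
  · have : Nonempty S := ⟨x 0⟩
    simpa [birk] using hH2.nonneg
  calc |birk f l n x - birk f l n y|
      = |∑ k ∈ Ico l n, (f k (shift^[k] x) - f k (shift^[k] y))| := by
        rw [birk, birk, sum_sub_distrib]
    _ ≤ ∑ k ∈ Ico l n, |f k (shift^[k] x) - f k (shift^[k] y)| := abs_sum_le_sum_abs _ _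
    _ ≤ ∑ k ∈ range n, |f k (shift^[k] x) - f k (shift^[k] y)| := by
        rw [range_eq_Ico]
        exact sum_le_sum_of_subset_of_nonneg (Ico_subset_Ico_left l.zero_le)
          fun _ _ _ => abs_nonneg _
    _ ≤ D := hH2 n hn x y hxy

def birkTrunc (s₀ : S) (f : ℕ → (ℕ → S) → ℝ) (m n : ℕ) (x : ℕ → S) : ℝ :=
  birk f m n (ofWord s₀ (word n x))

lemma continuous_birkTrunc [TopologicalSpace S] [DiscreteTopology S] (s₀ : S) (m n : ℕ) :
    Continuous (birkTrunc s₀ f m n) :=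
  (continuous_of_discreteTopology (f := fun a : Fin n → S => birk f m n (ofWord s₀ a))).comp
    (continuous_word n)

lemma dependsOn_birkTrunc (s₀ : S) (f : ℕ → (ℕ → S) → ℝ) (m n : ℕ) :
    DependsOn (birkTrunc s₀ f m n) (Set.Ico m n) :=
  (dependsOn_birk f m n).comp_ofWord_word s₀ n

lemma H2.abs_birk_sub_birkTrunc_le {D : ℝ} (hH2 : H2 f D) (s₀ : S) (m n : ℕ) (x : ℕ → S) :
    |birk f m n x - birkTrunc s₀ f m n x| ≤ D :=
  hH2.abs_birk_sub_le fun _ hi => (ofWord_word_apply_of_lt s₀ x hi).symm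

lemma H2.abs_birk_sub_birkTrunc_add_le {D : ℝ} (hH2 : H2 f D) (s₀ : S) {l m n : ℕ}
    (hlm : l ≤ m) (hmn : m ≤ n) (x : ℕ → S) :
    |birk f l n x - (birkTrunc s₀ f l m x + birkTrunc s₀ f m n x)| ≤ D + D := by
  rw [← birk_add hlm hmn, add_sub_add_comm]
  exact (abs_add_le _ _).trans
    (add_le_add (hH2.abs_birk_sub_birkTrunc_le s₀ l m x) (hH2.abs_birk_sub_birkTrunc_le s₀ m n x))

end Birkhoff

section PartitionFunction

variable {S : Type*} [Fintype S] [TopologicalSpace S] [DiscreteTopology S] [MeasurableSpace S]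
  [BorelSpace S] {σ : Measure (ℕ → S)} [IsProbabilityMeasure σ] {f : ℕ → (ℕ → S) → ℝ}

lemma Zmn_pos (hfc : ∀ k, Continuous (f k)) (lam : ℝ) (m n : ℕ) : 0 < Zmn σ f lam m n :=
  integral_exp_pos (continuous_const.mul (continuous_birk hfc m n)).integrable_exp

lemma abs_log_Zmn_sub_le (hfc : ∀ k, Continuous (f k)) {m n : ℕ} {F : (ℕ → S) → ℝ} {E : ℝ}
    (hE : ∀ x, |birk f m n x - F x| ≤ E) (hF : Continuous F) (lam : ℝ) :
    |Real.log (Zmn σ f lam m n) - Real.log (∫ x, Real.exp (lam * F x) ∂σ)| ≤ |lam| * E :=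
  abs_log_integral_exp_sub_le (continuous_const.mul (continuous_birk hfc m n)).integrable_exp
    (continuous_const.mul hF).integrable_exp fun x => by
      rw [← mul_sub, abs_mul]
      exact mul_le_mul_of_nonneg_left (hE x) (abs_nonneg lam)

lemma integral_exp_mul_birkTrunc_add
    (hσ : ∀ (m : ℕ) (a : Fin m → S), σ (cyl a) = (Fintype.card S : ℝ≥0∞)⁻¹ ^ m)
    (s₀ : S) (lam : ℝ) {l m n : ℕ} (hmn : m ≤ n) :
    ∫ x, Real.exp (lam * (birkTrunc s₀ f l m x + birkTrunc s₀ f m n x)) ∂σ =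
      (∫ x, Real.exp (lam * birkTrunc s₀ f l m x) ∂σ) *
        ∫ x, Real.exp (lam * birkTrunc s₀ f m n x) ∂σ := by
  have hexp (a b : ℕ) : DependsOn (fun x => Real.exp (lam * birkTrunc s₀ f a b x)) (Set.Ico a b) :=
    fun _ _ hxy => congrArg (fun t => Real.exp (lam * t)) (dependsOn_birkTrunc s₀ f a b hxy)
  simp only [mul_add, Real.exp_add]
  exact integral_mul_of_dependsOn hσ hmn ((hexp l m).mono fun _ hi => hi.2) (hexp m n)

end PartitionFunction

theorem fundamental_inequalities_general {S : Type*} [Fintype S] [TopologicalSpace S]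
    [DiscreteTopology S] [MeasurableSpace S] [BorelSpace S]
    (σ : Measure (ℕ → S)) [IsProbabilityMeasure σ]
    (hσ : ∀ (m : ℕ) (a : Fin m → S), σ (cyl a) = (Fintype.card S : ℝ≥0∞)⁻¹ ^ m)
    (f : ℕ → (ℕ → S) → ℝ) (hfc : ∀ n, Continuous (f n))
    (D : ℝ) (hH2 : H2 f D) :
    ∃ c : ℝ, 0 ≤ c ∧ ∀ (lam : ℝ) (l m n : ℕ), l ≤ m → m ≤ n →
      Real.exp (-(c * |lam|)) ≤ Zmn σ f lam l n / (Zmn σ f lam l m * Zmn σ f lam m n) ∧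
      Zmn σ f lam l n / (Zmn σ f lam l m * Zmn σ f lam m n) ≤ Real.exp (c * |lam|) := by
  obtain ⟨x₀⟩ := nonempty_of_isProbabilityMeasure σ
  have : Nonempty S := ⟨x₀ 0⟩
  refine ⟨4 * D, by linarith [hH2.nonneg], fun lam l m n hlm hmn => ?_⟩
  have hcont (a b : ℕ) := continuous_birkTrunc (f := f) (x₀ 0) a b
  have hpos (a b : ℕ) : 0 < ∫ x, Real.exp (lam * birkTrunc (x₀ 0) f a b x) ∂σ :=
    integral_exp_pos (continuous_const.mul (hcont a b)).integrable_exp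
  have hlm_log := abs_log_Zmn_sub_le (σ := σ) hfc
    (hH2.abs_birk_sub_birkTrunc_le (x₀ 0) l m) (hcont l m) lam
  have hmn_log := abs_log_Zmn_sub_le (σ := σ) hfc
    (hH2.abs_birk_sub_birkTrunc_le (x₀ 0) m n) (hcont m n) lam
  have hln_log := abs_log_Zmn_sub_le (σ := σ) hfc
    (hH2.abs_birk_sub_birkTrunc_add_le (x₀ 0) hlm hmn) ((hcont l m).add (hcont m n)) lam
  rw [integral_exp_mul_birkTrunc_add hσ (x₀ 0) lam hmn,
    Real.log_mul (hpos l m).ne' (hpos m n).ne'] at hln_log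
  have hZ (a b : ℕ) : 0 < Zmn σ f lam a b := Zmn_pos hfc lam a b
  refine exp_neg_le_and_le_exp_of_abs_log_le (div_pos (hZ l n) (mul_pos (hZ l m) (hZ m n))) ?_
  rw [Real.log_div (hZ l n).ne' (mul_pos (hZ l m) (hZ m n)).ne',
    Real.log_mul (hZ l m).ne' (hZ m n).ne']
  rw [abs_le] at hlm_log hmn_log hln_log ⊢
  constructor <;> linarith

/-- Fundamental inequalities: under (H2), there is a constant `c ≥ 0`
depending only on the distortion constant `D` such that
`e^{-c|λ|} ≤ Z_{l,n}(λ)/(Z_{l,m}(λ)·Z_{m,n}(λ)) ≤ e^{c|λ|}` for all `0 ≤ l ≤ m ≤ n`. -/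
theorem fundamental_inequalities {S : Type*} [Fintype S] [TopologicalSpace S]
    [DiscreteTopology S] [MeasurableSpace S] [BorelSpace S] (hq : 2 ≤ Fintype.card S)
    (σ : Measure (ℕ → S)) [IsProbabilityMeasure σ]
    (hσ : ∀ (m : ℕ) (a : Fin m → S), σ (cyl a) = (Fintype.card S : ℝ≥0∞)⁻¹ ^ m)
    (f : ℕ → (ℕ → S) → ℝ) (hfc : ∀ n, Continuous (f n))
    (M : ℝ) (hfb : ∀ n x, |f n x| ≤ M)
    (D : ℝ) (hH2 : H2 f D) :
    ∃ c : ℝ, 0 ≤ c ∧ ∀ (lam : ℝ) (l m n : ℕ), l ≤ m → m ≤ n →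
      Real.exp (-(c * |lam|)) ≤ Zmn σ f lam l n / (Zmn σ f lam l m * Zmn σ f lam m n) ∧
      Zmn σ f lam l n / (Zmn σ f lam l m * Zmn σ f lam m n) ≤ Real.exp (c * |lam|) :=
  fundamental_inequalities_general σ hσ f hfc D hH2
end
end

section
/- (Almost-sure bounds from the free energy.) Let (Ω, 𝒜, ν) be a probability space, (W_n) a sequence of real-valued random variables on Ω, and (a_n) a sequence of positive reals with a_n → ∞ such that Σ_n e^{−ε a_n} < ∞ for every ε > 0. Assume that for every β ∈ ℝ the limit c(β) := lim_{n→∞} (1/a_n) log ∫_Ω e^{β W_n} dν exists and is finite. Then c is convex with c(0) = 0, its one-sided derivatives c'₋(0) ≤ c'₊(0) at 0 exist, and for ν-almost every ω: c'₋(0) ≤ liminf_{n→∞} W_n(ω)/a_n ≤ limsup_{n→∞} W_n(ω)/a_n ≤ c'₊(0). -/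
open MeasureTheory Filter ProbabilityTheory Set
open scoped Topology

/-!
Hölder's inequality makes each `β ↦ (a n)⁻¹ * log E[exp (β * W n)]` convex, and convexity passes
to the pointwise limit `c`. If `c'₊(0) < q`, the slope of `c` at `0` gives some `β > 0` with
`c β < β * q`; Chernoff's bound then makes `ν {q * a n ≤ W n}` at most `exp (-ε * a n)` for large
`n`, which is summable, so by Borel–Cantelli `W n / a n < q` eventually, almost surely. The same
argument applied to `-W` gives the lower bound, and countably many rational `q` suffice.
-/

section ConvexLimit

variable {E : Type*} [AddCommMonoid E] [Module ℝ E] {ι : Type*} {l : Filter ι} [l.NeBot]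
  {s : Set E} {F : ι → E → ℝ} {f : E → ℝ}

theorem ConvexOn.of_tendsto (hs : Convex ℝ s) (hF : ∀ᶠ i in l, ConvexOn ℝ s (F i))
    (hlim : ∀ x ∈ s, Tendsto (F · x) l (𝓝 (f x))) : ConvexOn ℝ s f := by
  refine ⟨hs, fun x hx y hy p q hp hq hpq => ?_⟩
  refine le_of_tendsto_of_tendsto (hlim _ (hs hx hy hp hq hpq))
    (((hlim x hx).const_smul p).add ((hlim y hy).const_smul q)) ?_
  filter_upwards [hF] with i hi using hi.2 hx hy hp hq hpq

end ConvexLimit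

theorem le_liminf_and_limsup_le_of_forall_rat {ι : Type*} {l : Filter ι} [l.NeBot] {u : ι → ℝ}
    {m M : ℝ} (hm : ∀ q : ℚ, (q : ℝ) < m → ∀ᶠ i in l, q < u i)
    (hM : ∀ q : ℚ, M < q → ∀ᶠ i in l, u i < q) :
    m ≤ liminf u l ∧ limsup u l ≤ M := by
  obtain ⟨q₀, hq₀⟩ := exists_rat_lt m
  obtain ⟨q₁, hq₁⟩ := exists_rat_gt M
  have hbddBelow : IsBoundedUnder (· ≥ ·) l u :=
    isBoundedUnder_of_eventually_ge ((hm q₀ hq₀).mono fun _ h => h.le)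
  have hbddAbove : IsBoundedUnder (· ≤ ·) l u :=
    isBoundedUnder_of_eventually_le ((hM q₁ hq₁).mono fun _ h => h.le)
  constructor
  · refine (le_liminf_iff hbddAbove.isCoboundedUnder_ge hbddBelow).2 fun y hy => ?_
    obtain ⟨q, hyq, hqm⟩ := exists_rat_btwn hy
    exact (hm q hqm).mono fun _ h => hyq.trans h
  · refine (limsup_le_iff hbddBelow.isCoboundedUnder_le hbddAbove).2 fun y hy => ?_
    obtain ⟨q, hMq, hqy⟩ := exists_rat_btwn hy
    exact (hM q hMq).mono fun _ h => h.trans hqy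

section OneSidedSlope

variable {f : ℝ → ℝ} {f' q : ℝ}

theorem HasDerivWithinAt.exists_pos_lt_mul_of_lt (hf : HasDerivWithinAt f f' (Ioi 0) 0)
    (hf0 : f 0 = 0) (hq : f' < q) : ∃ β > 0, f β < β * q := by
  obtain ⟨β, hβq, hβ : 0 < β⟩ := (((hasDerivWithinAt_iff_tendsto_slope' self_notMem_Ioi).1
    hf).eventually_lt_const hq |>.and self_mem_nhdsWithin).exists
  refine ⟨β, hβ, ?_⟩
  rwa [slope_def_field, hf0, sub_zero, sub_zero, div_lt_iff₀ hβ, mul_comm] at hβq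

theorem HasDerivWithinAt.exists_neg_lt_mul_of_gt (hf : HasDerivWithinAt f f' (Iio 0) 0)
    (hf0 : f 0 = 0) (hq : q < f') : ∃ β < 0, f β < β * q := by
  obtain ⟨β, hβq, hβ : β < 0⟩ := (((hasDerivWithinAt_iff_tendsto_slope' self_notMem_Iio).1
    hf).eventually_const_lt hq |>.and self_mem_nhdsWithin).exists
  refine ⟨β, hβ, ?_⟩
  rwa [slope_def_field, hf0, sub_zero, sub_zero, lt_div_iff_of_neg hβ, mul_comm] at hβq

end OneSidedSlope

namespace ProbabilityTheory

variable {Ω : Type*} [MeasurableSpace Ω] {μ : Measure Ω} {X : Ω → ℝ}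

theorem mgf_add_le_rpow_mul_rpow {s t p q : ℝ} (hp : 0 ≤ p) (hq : 0 ≤ q) (hpq : p + q = 1)
    (hs : Integrable (fun ω => Real.exp (s * X ω)) μ)
    (ht : Integrable (fun ω => Real.exp (t * X ω)) μ) :
    mgf X μ (p * s + q * t) ≤ mgf X μ s ^ p * mgf X μ t ^ q := by
  have hst : Integrable (fun ω => Real.exp ((p * s + q * t) * X ω)) μ :=
    convex_integrableExpSet hs ht hp hq hpq
  have hexp : ∀ ω, ENNReal.ofReal (Real.exp ((p * s + q * t) * X ω)) =
      ENNReal.ofReal (Real.exp (s * X ω)) ^ p * ENNReal.ofReal (Real.exp (t * X ω)) ^ q := by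
    intro ω
    rw [ENNReal.ofReal_rpow_of_pos (Real.exp_pos _), ENNReal.ofReal_rpow_of_pos (Real.exp_pos _),
      ← ENNReal.ofReal_mul (by positivity), ← Real.exp_mul, ← Real.exp_mul, ← Real.exp_add]
    ring_nf
  have hholder := ENNReal.lintegral_mul_norm_pow_le (μ := μ)
    hs.aemeasurable.ennreal_ofReal ht.aemeasurable.ennreal_ofReal hp hq hpq
  have hofReal {u : ℝ} (hu : Integrable (fun ω => Real.exp (u * X ω)) μ) :
      ENNReal.ofReal (mgf X μ u) = ∫⁻ ω, ENNReal.ofReal (Real.exp (u * X ω)) ∂μ :=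
    ofReal_integral_eq_lintegral_ofReal hu (ae_of_all _ fun _ => (Real.exp_pos _).le)
  refine (ENNReal.ofReal_le_ofReal_iff
    (mul_nonneg (Real.rpow_nonneg mgf_nonneg p) (Real.rpow_nonneg mgf_nonneg q))).1 ?_
  rw [ENNReal.ofReal_mul (Real.rpow_nonneg mgf_nonneg p),
    ← ENNReal.ofReal_rpow_of_nonneg mgf_nonneg hp, ← ENNReal.ofReal_rpow_of_nonneg mgf_nonneg hq,
    hofReal hs, hofReal ht, hofReal hst]
  simpa only [hexp] using hholder

theorem convexOn_cgf [NeZero μ] : ConvexOn ℝ (integrableExpSet X μ) (cgf X μ) := by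
  refine ⟨convex_integrableExpSet, fun s hs t ht p q hp hq hpq => ?_⟩
  have hs_pos : 0 < mgf X μ s := mgf_pos' (NeZero.ne μ) hs
  have ht_pos : 0 < mgf X μ t := mgf_pos' (NeZero.ne μ) ht
  calc cgf X μ (p • s + q • t) ≤ Real.log (mgf X μ s ^ p * mgf X μ t ^ q) :=
        Real.log_le_log (mgf_pos' (NeZero.ne μ) (convex_integrableExpSet hs ht hp hq hpq))
          (mgf_add_le_rpow_mul_rpow hp hq hpq hs ht)
    _ = p • cgf X μ s + q • cgf X μ t := by
        rw [Real.log_mul (by positivity) (by positivity), Real.log_rpow hs_pos,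
          Real.log_rpow ht_pos]
        rfl

variable [IsFiniteMeasure μ]

theorem ae_eventually_notMem_of_summable_measureReal {s : ℕ → Set Ω}
    (hs : Summable fun n => μ.real (s n)) : ∀ᵐ ω ∂μ, ∀ᶠ n in atTop, ω ∉ s n :=
  ae_eventually_notMem <| by
    simpa only [ofReal_measureReal (measure_ne_top μ _)] using hs.tsum_ofReal_ne_top

variable {W : ℕ → Ω → ℝ} {a : ℕ → ℝ} {β L q : ℝ}

theorem ae_eventually_div_lt_of_tendsto_cgf (ha : ∀ n, 0 < a n)
    (hsum : ∀ ε : ℝ, 0 < ε → Summable fun n => Real.exp (-(ε * a n)))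
    (hβ : 0 < β) (hLq : L < β * q) (hint : ∀ n, Integrable (fun ω => Real.exp (β * W n ω)) μ)
    (hL : Tendsto (fun n => (a n)⁻¹ * cgf (W n) μ β) atTop (𝓝 L)) :
    ∀ᵐ ω ∂μ, ∀ᶠ n in atTop, W n ω / a n < q := by
  set ε := β * q - L
  have hcgf : ∀ᶠ n in atTop, cgf (W n) μ β < a n * (L + ε / 2) := by
    filter_upwards [hL.eventually_lt_const (by linarith : L < L + ε / 2)] with n hn
    rwa [inv_mul_lt_iff₀ (ha n)] at hn
  have htail : ∀ᶠ n in atTop, ‖μ.real {ω | q * a n ≤ W n ω}‖ ≤ Real.exp (-(ε / 2 * a n)) := by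
    filter_upwards [hcgf] with n hn
    rw [Real.norm_of_nonneg measureReal_nonneg]
    refine (measure_ge_le_exp_cgf _ hβ.le (hint n)).trans (Real.exp_le_exp.2 ?_)
    linarith
  filter_upwards [ae_eventually_notMem_of_summable_measureReal
    ((hsum _ (by linarith)).of_norm_bounded_eventually_nat htail)] with ω hω
  filter_upwards [hω] with n hn
  rw [div_lt_iff₀ (ha n)]
  exact lt_of_not_ge hn

theorem ae_eventually_lt_div_of_tendsto_cgf (ha : ∀ n, 0 < a n)
    (hsum : ∀ ε : ℝ, 0 < ε → Summable fun n => Real.exp (-(ε * a n)))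
    (hβ : β < 0) (hLq : L < β * q) (hint : ∀ n, Integrable (fun ω => Real.exp (β * W n ω)) μ)
    (hL : Tendsto (fun n => (a n)⁻¹ * cgf (W n) μ β) atTop (𝓝 L)) :
    ∀ᵐ ω ∂μ, ∀ᶠ n in atTop, q < W n ω / a n := by
  have hneg := ae_eventually_div_lt_of_tendsto_cgf (W := fun n => -W n) (q := -q) ha hsum
    (neg_pos.2 hβ) (by rwa [neg_mul_neg]) (by simpa only [Pi.neg_apply, neg_mul_neg] using hint)
    (by simpa only [cgf_neg, neg_neg] using hL)
  filter_upwards [hneg] with ω hω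
  filter_upwards [hω] with n hn
  rw [Pi.neg_apply, neg_div] at hn
  exact neg_lt_neg_iff.1 hn

end ProbabilityTheory

theorem as_bounds_from_free_energy_general {Ω : Type*} [MeasurableSpace Ω]
    (ν : Measure Ω) [IsProbabilityMeasure ν]
    (W : ℕ → Ω → ℝ)
    (a : ℕ → ℝ) (ha : ∀ n, 0 < a n)
    (hsum : ∀ ε : ℝ, 0 < ε → Summable fun n => Real.exp (-(ε * a n)))
    (hint : ∀ (β : ℝ) (n : ℕ), Integrable (fun ω => Real.exp (β * W n ω)) ν)
    (c : ℝ → ℝ)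
    (hc : ∀ β : ℝ, Tendsto
      (fun n => (a n)⁻¹ * Real.log (∫ ω, Real.exp (β * W n ω) ∂ν)) atTop (𝓝 (c β))) :
    ConvexOn ℝ Set.univ c ∧ c 0 = 0 ∧
    ∃ dm dp : ℝ,
      HasDerivWithinAt c dm (Set.Iio 0) 0 ∧ HasDerivWithinAt c dp (Set.Ioi 0) 0 ∧ dm ≤ dp ∧
      ∀ᵐ ω ∂ν, dm ≤ Filter.liminf (fun n => W n ω / a n) atTop ∧
        Filter.limsup (fun n => W n ω / a n) atTop ≤ dp := by
  have hcgf : ∀ β, Tendsto (fun n => (a n)⁻¹ * cgf (W n) ν β) atTop (𝓝 (c β)) := hc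
  have hconv : ConvexOn ℝ univ c := by
    refine .of_tendsto convex_univ (.of_forall fun n => ?_) fun β _ => hcgf β
    have hset : integrableExpSet (W n) ν = univ := eq_univ_of_forall (hint · n)
    exact hset ▸ convexOn_cgf.smul (inv_nonneg.2 (ha n).le)
  have hc0 : c 0 = 0 := tendsto_nhds_unique (hcgf 0) (by simp [cgf_zero])
  have h0 : (0 : ℝ) ∈ interior univ := by simp
  have hdm := hconv.hasDerivWithinAt_leftDeriv_of_mem_interior h0
  have hdp := hconv.hasDerivWithinAt_rightDeriv_of_mem_interior h0
  refine ⟨hconv, hc0, _, _, hdm, hdp, hconv.leftDeriv_le_rightDeriv_of_mem_interior h0, ?_⟩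
  have hlow : ∀ᵐ ω ∂ν, ∀ q : ℚ, (q : ℝ) < derivWithin c (Iio 0) 0 →
      ∀ᶠ n in atTop, q < W n ω / a n := by
    refine ae_all_iff.2 fun q => eventually_imp_distrib_left.2 fun hq => ?_
    obtain ⟨β, hβ, hcβ⟩ := hdm.exists_neg_lt_mul_of_gt hc0 hq
    exact ae_eventually_lt_div_of_tendsto_cgf ha hsum hβ hcβ (hint β) (hcgf β)
  have hup : ∀ᵐ ω ∂ν, ∀ q : ℚ, derivWithin c (Ioi 0) 0 < q →
      ∀ᶠ n in atTop, W n ω / a n < q := by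
    refine ae_all_iff.2 fun q => eventually_imp_distrib_left.2 fun hq => ?_
    obtain ⟨β, hβ, hcβ⟩ := hdp.exists_pos_lt_mul_of_lt hc0 hq
    exact ae_eventually_div_lt_of_tendsto_cgf ha hsum hβ hcβ (hint β) (hcgf β)
  filter_upwards [hlow, hup] with ω using le_liminf_and_limsup_le_of_forall_rat

/-- Almost-sure bounds from the free energy: if the free energy
`c(β) = lim (1/a_n) log ∫ e^{β W_n} dν` exists for all `β`, then `c` is convex with
`c(0) = 0`, its one-sided derivatives at `0` exist, and almost surely
`c'₋(0) ≤ liminf W_n/a_n ≤ limsup W_n/a_n ≤ c'₊(0)`. -/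
theorem as_bounds_from_free_energy {Ω : Type*} [MeasurableSpace Ω]
    (ν : Measure Ω) [IsProbabilityMeasure ν]
    (W : ℕ → Ω → ℝ) (hWm : ∀ n, Measurable (W n))
    (a : ℕ → ℝ) (ha : ∀ n, 0 < a n) (hatop : Tendsto a atTop atTop)
    (hsum : ∀ ε : ℝ, 0 < ε → Summable fun n => Real.exp (-(ε * a n)))
    (hint : ∀ (β : ℝ) (n : ℕ), Integrable (fun ω => Real.exp (β * W n ω)) ν)
    (c : ℝ → ℝ)
    (hc : ∀ β : ℝ, Tendsto
      (fun n => (a n)⁻¹ * Real.log (∫ ω, Real.exp (β * W n ω) ∂ν)) atTop (𝓝 (c β))) :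
    ConvexOn ℝ Set.univ c ∧ c 0 = 0 ∧
    ∃ dm dp : ℝ,
      HasDerivWithinAt c dm (Set.Iio 0) 0 ∧ HasDerivWithinAt c dp (Set.Ioi 0) 0 ∧ dm ≤ dp ∧
      ∀ᵐ ω ∂ν, dm ≤ Filter.liminf (fun n => W n ω / a n) atTop ∧
        Filter.limsup (fun n => W n ω / a n) atTop ≤ dp :=
  as_bounds_from_free_energy_general ν W a ha hsum hint c hc
end
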